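/- arXiv:1603.07952 — 2 statements merged into one kernel-verified Lean document; each statement's English description precedes it below -/
import Mathlib

section
/- Let ℝ_p[X⁰,…,Xⁿ] be the space of homogeneous polynomials of degree p in n+1 variables and let □ = −∂₀² + Σᵢ∂ᵢ² be the wave operator. Then ℝ_p[X⁰,…,Xⁿ] = ℋ_p ⊕ (−(X⁰)² + Σᵢ(Xⁱ)²)·ℝ_{p−2}[X⁰,…,Xⁿ], where ℋ_p = ker(□) ∩ ℝ_p[X⁰,…,Xⁿ] is the space of wave-harmonic homogeneous polynomials of degree p. -/
/-!
Write `q` for the Minkowski form. For `Q` homogeneous of degree `d`, the product rule and Euler's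
identity give `□(q Q) = q □Q + (4d + 2(n+1)) Q`. Applying `□` to `q □Q + γ Q = 0` yields the same
kind of equation for `□Q`, in lower degree and with a larger constant, so by induction on the degree
`q □Q + γ Q = 0` with `γ > 0` forces `Q = 0`. In particular `Q ↦ □(q Q)` is injective, hence
bijective, on the finite-dimensional space of forms of degree `d`. Given `P` of degree `p`, pick
`Q` of degree `p - 2` with `□(q Q) = □P`; then `P = (P - q Q) + q Q` is the decomposition, and it is
unique because a harmonic `q Q` must vanish.
-/

noncomputable section

open MvPolynomial

/-- The wave operator `□P = −∂₀²P + Σᵢ ∂ᵢ²P` on polynomials in `X⁰,…,Xⁿ`. -/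
def waveOpP (n : ℕ) (P : MvPolynomial (Fin (n+1)) ℝ) : MvPolynomial (Fin (n+1)) ℝ :=
  -(pderiv 0 (pderiv 0 P)) + ∑ i : Fin n, pderiv i.succ (pderiv i.succ P)

/-- The Minkowski quadratic polynomial `−(X⁰)² + Σᵢ (Xⁱ)²`. -/
def minkP (n : ℕ) : MvPolynomial (Fin (n+1)) ℝ :=
  -(X 0) ^ 2 + ∑ i : Fin n, (X i.succ) ^ 2

namespace MvPolynomial

variable {σ R : Type*} [CommSemiring R]

theorem pderiv_eq_zero_of_isHomogeneous_zero {φ : MvPolynomial σ R} (h : φ.IsHomogeneous 0)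
    (i : σ) : pderiv i φ = 0 := by
  rw [← totalDegree_zero_iff_isHomogeneous, totalDegree_eq_zero_iff_eq_C] at h
  rw [h, pderiv_C]

theorem pderiv_pderiv_eq_zero_of_isHomogeneous {φ : MvPolynomial σ R} {d : ℕ}
    (h : φ.IsHomogeneous d) (hd : d < 2) (i j : σ) : pderiv i (pderiv j φ) = 0 :=
  pderiv_eq_zero_of_isHomogeneous_zero (by simpa [Nat.sub_eq_zero_of_le (by omega : d ≤ 1)]
    using h.pderiv) i

theorem pderiv_pderiv_mul (i : σ) (f g : MvPolynomial σ R) :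
    pderiv i (pderiv i (f * g)) =
      pderiv i (pderiv i f) * g + 2 * (pderiv i f * pderiv i g) + f * pderiv i (pderiv i g) := by
  simp only [pderiv_mul, map_add]
  ring

end MvPolynomial

section Wave

variable {n : ℕ}

theorem waveOpP_add (P Q : MvPolynomial (Fin (n+1)) ℝ) :
    waveOpP n (P + Q) = waveOpP n P + waveOpP n Q := by
  simp only [waveOpP, map_add, Finset.sum_add_distrib]
  ring

theorem waveOpP_smul (a : ℝ) (P : MvPolynomial (Fin (n+1)) ℝ) :
    waveOpP n (a • P) = a • waveOpP n P := by
  simp only [waveOpP, Derivation.map_smul, smul_add, Finset.smul_sum, smul_neg]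

variable (n) in
@[simps]
def waveOpPₗ : MvPolynomial (Fin (n+1)) ℝ →ₗ[ℝ] MvPolynomial (Fin (n+1)) ℝ where
  toFun := waveOpP n
  map_add' := waveOpP_add
  map_smul' := waveOpP_smul

theorem waveOpP_sub (P Q : MvPolynomial (Fin (n+1)) ℝ) :
    waveOpP n (P - Q) = waveOpP n P - waveOpP n Q :=
  map_sub (waveOpPₗ n) P Q

theorem waveOpP_zero : waveOpP n 0 = 0 :=
  map_zero (waveOpPₗ n)

theorem waveOpP_nsmul (k : ℕ) (P : MvPolynomial (Fin (n+1)) ℝ) :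
    waveOpP n (k • P) = k • waveOpP n P :=
  map_nsmul (waveOpPₗ n) k P

theorem MvPolynomial.IsHomogeneous.waveOpP {P : MvPolynomial (Fin (n+1)) ℝ} {d : ℕ}
    (h : P.IsHomogeneous d) : (waveOpP n P).IsHomogeneous (d - 2) := by
  have h2 (i : Fin (n+1)) : (pderiv i (pderiv i P)).IsHomogeneous (d - 2) := by
    simpa [Nat.sub_sub] using h.pderiv.pderiv (i := i)
  exact (h2 0).neg.add (IsHomogeneous.sum _ _ _ fun i _ => h2 i.succ)

theorem waveOpP_eq_zero_of_isHomogeneous_of_lt_two {P : MvPolynomial (Fin (n+1)) ℝ} {d : ℕ}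
    (h : P.IsHomogeneous d) (hd : d < 2) : waveOpP n P = 0 := by
  simp [waveOpP, pderiv_pderiv_eq_zero_of_isHomogeneous h hd]

theorem isHomogeneous_minkP : (minkP n).IsHomogeneous 2 :=
  ((isHomogeneous_X _ _).pow 2).neg.add
    (IsHomogeneous.sum _ _ _ fun _ _ => (isHomogeneous_X _ _).pow 2)

theorem pderiv_zero_minkP : pderiv 0 (minkP n) = -2 * X 0 := by
  simp [minkP, pderiv_X_of_ne (Fin.succ_ne_zero _)]

theorem pderiv_succ_minkP (i : Fin n) : pderiv i.succ (minkP n) = 2 * X i.succ := by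
  simp [minkP, pderiv_X, Pi.single_apply, Fin.succ_ne_zero]

theorem pderiv_zero_pderiv_zero_minkP : pderiv 0 (pderiv 0 (minkP n)) = -2 := by
  rw [pderiv_zero_minkP, ← map_ofNat C, ← map_neg, pderiv_C_mul, pderiv_X_self, mul_one, map_neg,
    map_ofNat]

theorem pderiv_succ_pderiv_succ_minkP (i : Fin n) :
    pderiv i.succ (pderiv i.succ (minkP n)) = 2 := by
  rw [pderiv_succ_minkP, ← map_ofNat C, pderiv_C_mul, pderiv_X_self, mul_one, map_ofNat]

theorem waveOpP_minkP_mul {Q : MvPolynomial (Fin (n+1)) ℝ} {d : ℕ} (h : Q.IsHomogeneous d) :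
    waveOpP n (minkP n * Q) = minkP n * waveOpP n Q + (4 * d + 2 * (n + 1)) • Q := by
  have euler : X 0 * pderiv 0 Q + ∑ i : Fin n, X i.succ * pderiv i.succ Q = d • Q := by
    rw [← h.sum_X_mul_pderiv, Fin.sum_univ_succ]
  simp only [waveOpP, pderiv_pderiv_mul, Finset.sum_add_distrib]
  simp only [pderiv_zero_pderiv_zero_minkP, pderiv_succ_pderiv_succ_minkP]
  simp only [pderiv_zero_minkP, pderiv_succ_minkP, mul_assoc, ← Finset.mul_sum, Finset.sum_const,
    Finset.card_univ, Fintype.card_fin]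
  linear_combination 4 * euler

theorem eq_zero_of_minkP_mul_waveOpP_add_nsmul_eq_zero {Q : MvPolynomial (Fin (n+1)) ℝ} {d : ℕ}
    (hQ : Q.IsHomogeneous d) {γ : ℕ} (hγ : 0 < γ) (h : minkP n * waveOpP n Q + γ • Q = 0) :
    Q = 0 := by
  induction d using Nat.strong_induction_on generalizing Q γ with
  | _ d ih =>
  suffices hW : waveOpP n Q = 0 by
    rw [hW, mul_zero, zero_add] at h
    exact (smul_eq_zero.mp h).resolve_left hγ.ne'
  rcases lt_or_ge d 2 with hd | hd
  · exact waveOpP_eq_zero_of_isHomogeneous_of_lt_two hQ hd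
  obtain ⟨e, rfl⟩ := Nat.exists_eq_add_of_le' hd
  have hW : (waveOpP n Q).IsHomogeneous e := by simpa using hQ.waveOpP
  refine ih e (by omega) hW (γ := γ + (4 * e + 2 * (n + 1))) (by omega) ?_
  have h' := congrArg (waveOpP n) h
  rw [waveOpP_add, waveOpP_minkP_mul hW, waveOpP_nsmul, waveOpP_zero] at h'
  linear_combination h'

theorem eq_zero_of_waveOpP_minkP_mul_eq_zero {Q : MvPolynomial (Fin (n+1)) ℝ} {d : ℕ}
    (hQ : Q.IsHomogeneous d) (h : waveOpP n (minkP n * Q) = 0) : Q = 0 :=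
  eq_zero_of_minkP_mul_waveOpP_add_nsmul_eq_zero hQ (γ := 4 * d + 2 * (n + 1)) (by omega)
    (by rwa [← waveOpP_minkP_mul hQ])

variable (n) in
def waveOpMinkMul (d : ℕ) :
    homogeneousSubmodule (Fin (n+1)) ℝ d →ₗ[ℝ] homogeneousSubmodule (Fin (n+1)) ℝ d :=
  (waveOpPₗ n ∘ₗ LinearMap.mulLeft ℝ (minkP n)).restrict fun _ hQ => by
    simpa using (isHomogeneous_minkP.mul hQ).waveOpP

theorem waveOpMinkMul_injective (d : ℕ) : Function.Injective (waveOpMinkMul n d) :=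
  (injective_iff_map_eq_zero _).mpr fun Q hQ =>
    Subtype.ext (eq_zero_of_waveOpP_minkP_mul_eq_zero Q.2 (congrArg Subtype.val hQ))

theorem waveOpMinkMul_surjective (d : ℕ) : Function.Surjective (waveOpMinkMul n d) :=
  have : Module.Finite ℝ (homogeneousSubmodule (Fin (n+1)) ℝ d) :=
    Module.Finite.iff_fg.mpr (homogeneousSubmodule_fg _ _ d)
  LinearMap.injective_iff_surjective.mp (waveOpMinkMul_injective d)

theorem exists_isHomogeneous_waveOpP_minkP_mul_eq {R : MvPolynomial (Fin (n+1)) ℝ} {d : ℕ}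
    (hR : R.IsHomogeneous d) : ∃ Q, Q.IsHomogeneous d ∧ waveOpP n (minkP n * Q) = R := by
  obtain ⟨Q, hQ⟩ := waveOpMinkMul_surjective d ⟨R, hR⟩
  exact ⟨Q, Q.2, congrArg Subtype.val hQ⟩

theorem exists_eq_add_minkP_mul_of_isHomogeneous {p : ℕ} {P : MvPolynomial (Fin (n+1)) ℝ}
    (hP : P.IsHomogeneous p) :
    ∃ H Q, H.IsHomogeneous p ∧ waveOpP n H = 0 ∧ Q.IsHomogeneous (p - 2) ∧
      P = H + minkP n * Q := by
  rcases lt_or_ge p 2 with hp | hp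
  · exact ⟨P, 0, hP, waveOpP_eq_zero_of_isHomogeneous_of_lt_two hP hp, isHomogeneous_zero _ _ _,
      by simp⟩
  obtain ⟨d, rfl⟩ := Nat.exists_eq_add_of_le' hp
  obtain ⟨Q, hQ, hQP⟩ := exists_isHomogeneous_waveOpP_minkP_mul_eq (by simpa using hP.waveOpP)
  have hmul : (minkP n * Q).IsHomogeneous (d + 2) := by
    simpa [add_comm] using isHomogeneous_minkP.mul hQ
  exact ⟨P - minkP n * Q, Q, hP.sub hmul, by rw [waveOpP_sub, hQP, sub_self], by simpa using hQ,
    by ring⟩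

end Wave

theorem homogeneous_poly_decomposition (n p : ℕ) (P : MvPolynomial (Fin (n+1)) ℝ)
    (hP : P.IsHomogeneous p) :
    ∃! HQ : MvPolynomial (Fin (n+1)) ℝ × MvPolynomial (Fin (n+1)) ℝ,
      HQ.1.IsHomogeneous p ∧ waveOpP n HQ.1 = 0 ∧ HQ.2.IsHomogeneous (p - 2) ∧
      P = HQ.1 + minkP n * HQ.2 := by
  obtain ⟨H, Q, hH, hwH, hQ, rfl⟩ := exists_eq_add_minkP_mul_of_isHomogeneous hP
  refine ⟨(H, Q), ⟨hH, hwH, hQ, rfl⟩, ?_⟩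
  rintro ⟨H', Q'⟩ ⟨-, hwH', hQ', hsum⟩
  dsimp only at hwH' hQ' hsum
  have hmul : minkP n * (Q' - Q) = H - H' := by linear_combination -hsum
  have hQQ' : Q' = Q := sub_eq_zero.mp <| eq_zero_of_waveOpP_minkP_mul_eq_zero (hQ'.sub hQ) <| by
    rw [hmul, waveOpP_sub, hwH, hwH', sub_zero]
  exact Prod.ext (by linear_combination -hsum - minkP n * hQQ') hQQ'
end
end

section
/- Let Ā_i^s be the Lorentz boost in the ball model, given explicitly for x in the open unit ball by Ā_i^s(x) = (1/D)(x¹, …, cosh(s)xⁱ + sinh(s)(1+|x|²)/2, …, xⁿ) with D = (1−|x|²)/2 + ((1+|x|²)/2)cosh(s) + xⁱ sinh(s). Then, with ρ(x) = (1−|x|²)/2, one has the exact identity 1/ρ(Ā_i^{−s}(x)) = cosh(s)·(1+|x|²)/(1−|x|²) − sinh(s)·2xⁱ/(1−|x|²) + 1. In particular, for x̂ on the unit sphere, lim_{λ→1} ρ(Ā_i^{−s}(λx̂))/ρ(λx̂) = 1/(cosh s − x̂ⁱ sinh s). -/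
/-!
Statement 16: for the Lorentz boost in the ball model,
Ā_i^s(x) = (1/D)(x¹,…, cosh(s)xⁱ + sinh(s)(1+|x|²)/2, …, xⁿ),
D = (1−|x|²)/2 + ((1+|x|²)/2)cosh s + xⁱ sinh s, and ρ(x) = (1−|x|²)/2, one has
  1/ρ(Ā_i^{−s}(x)) = cosh(s)(1+|x|²)/(1−|x|²) − sinh(s)·2xⁱ/(1−|x|²) + 1,
and in particular, for xh on the unit sphere,
  lim_{λ→1⁻} ρ(Ā_i^{−s}(λxh))/ρ(λxh) = 1/(cosh s − xhⁱ sinh s).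
-/

noncomputable section

variable {n : ℕ}

/-- The conformal factor `ρ(x) = (1 − |x|²)/2`. -/
def rho (x : EuclideanSpace ℝ (Fin n)) : ℝ := (1 - ‖x‖ ^ 2) / 2

/-- The Lorentz boost `Ā_i^s` in the ball model. -/
def boostBall (i : Fin n) (s : ℝ) (x : EuclideanSpace ℝ (Fin n)) :
    EuclideanSpace ℝ (Fin n) :=
  (WithLp.equiv 2 (Fin n → ℝ)).symm fun j =>
    (if j = i then Real.cosh s * x i + Real.sinh s * (1 + ‖x‖ ^ 2) / 2 else x j) /
      ((1 - ‖x‖ ^ 2) / 2 + (1 + ‖x‖ ^ 2) / 2 * Real.cosh s + x i * Real.sinh s)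

lemma norm_sq_sum (x : EuclideanSpace ℝ (Fin n)) : ∑ j, (x j) ^ 2 = ‖x‖ ^ 2 := by
  rw [PiLp.norm_sq_eq_of_L2]
  simp [Real.norm_eq_abs, sq_abs]

lemma sq_apply_le (x : EuclideanSpace ℝ (Fin n)) (i : Fin n) : (x i) ^ 2 ≤ ‖x‖ ^ 2 := by
  rw [← norm_sq_sum]
  exact Finset.single_le_sum (f := fun j => (x j) ^ 2) (fun j _ => sq_nonneg _)
    (Finset.mem_univ i)

lemma Dpos (i : Fin n) (s : ℝ) (x : EuclideanSpace ℝ (Fin n)) (hx : ‖x‖ < 1) :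
    0 < (1 - ‖x‖ ^ 2) / 2 + (1 + ‖x‖ ^ 2) / 2 * Real.cosh s - x i * Real.sinh s := by
  have hxi := sq_apply_le x i
  set r2 := ‖x‖ ^ 2 with hr2def
  have hr2lt : r2 < 1 := by nlinarith [norm_nonneg x]
  have hr2nn : 0 ≤ r2 := sq_nonneg _
  have hch := Real.cosh_pos s
  have hchsq := Real.cosh_sq_sub_sinh_sq s
  have habs : |x i| ≤ (1 + r2) / 2 := by
    nlinarith [sq_abs (x i), sq_nonneg (|x i| - 1)]
  have hsh : |Real.sinh s| < Real.cosh s := by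
    nlinarith [sq_abs (Real.sinh s)]
  have hprod : x i * Real.sinh s ≤ (1 + r2) / 2 * Real.cosh s := by
    calc x i * Real.sinh s ≤ |x i * Real.sinh s| := le_abs_self _
    _ = |x i| * |Real.sinh s| := abs_mul _ _
    _ ≤ (1 + r2) / 2 * Real.cosh s :=
        mul_le_mul habs hsh.le (abs_nonneg _) (by positivity)
  nlinarith

lemma key (i : Fin n) (s : ℝ) (x : EuclideanSpace ℝ (Fin n)) (hx : ‖x‖ < 1) :
    rho (boostBall i (-s) x) =
      rho x / ((1 - ‖x‖ ^ 2) / 2 + (1 + ‖x‖ ^ 2) / 2 * Real.cosh s - x i * Real.sinh s) := by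
  have hr2 := norm_sq_sum x
  have hxi := sq_apply_le x i
  have hDpos := Dpos i s x hx
  set r2 := ‖x‖ ^ 2 with hr2def
  have hchsq := Real.cosh_sq_sub_sinh_sq s
  have hDne : (1 - r2) / 2 + (1 + r2) / 2 * Real.cosh s - x i * Real.sinh s ≠ 0 :=
    ne_of_gt hDpos
  set D := (1 - r2) / 2 + (1 + r2) / 2 * Real.cosh s - x i * Real.sinh s with hD
  have hbnorm : ‖boostBall i (-s) x‖ ^ 2 =
      ((Real.cosh s * x i - Real.sinh s * (1 + r2) / 2) ^ 2 + (r2 - (x i) ^ 2)) / D ^ 2 := by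
    rw [PiLp.norm_sq_eq_of_L2]
    have hcomp : ∀ j, (boostBall i (-s) x) j =
        (if j = i then Real.cosh s * x i - Real.sinh s * (1 + r2) / 2 else x j) / D := by
      intro j
      simp only [boostBall, WithLp.equiv_symm_apply, PiLp.toLp_apply, Real.cosh_neg, Real.sinh_neg, ← hr2def]
      rw [hD]
      ring_nf
    simp only [Real.norm_eq_abs, sq_abs, hcomp, div_pow]
    rw [← Finset.sum_div]
    congr 1
    have hcong : ∀ j ∈ Finset.univ.erase i,
        (if j = i then Real.cosh s * x i - Real.sinh s * (1 + r2) / 2 else x j) ^ 2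
          = (x j) ^ 2 := by
      intro j hj
      rw [if_neg (Finset.ne_of_mem_erase hj)]
    rw [← Finset.add_sum_erase _ _ (Finset.mem_univ i), if_pos rfl,
      Finset.sum_congr rfl hcong]
    have h2 := Finset.add_sum_erase Finset.univ (fun j => (x j) ^ 2) (Finset.mem_univ i)
    simp only at h2
    rw [hr2] at h2
    linarith
  simp only [rho, hbnorm, ← hr2def]
  rw [div_eq_div_iff (by norm_num) hDne]
  have hD2 : D ^ 2 ≠ 0 := pow_ne_zero 2 hDne
  field_simp
  rw [hD]
  linear_combination ((1 + r2) ^ 2 - 4 * (x i) ^ 2) * hchsq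

theorem rho_boostBall (i : Fin n) (s : ℝ) :
    (∀ x : EuclideanSpace ℝ (Fin n), x ∈ Metric.ball 0 1 →
      (rho (boostBall i (-s) x))⁻¹ =
        Real.cosh s * (1 + ‖x‖ ^ 2) / (1 - ‖x‖ ^ 2)
          - Real.sinh s * (2 * x i) / (1 - ‖x‖ ^ 2) + 1) ∧
    (∀ xh : EuclideanSpace ℝ (Fin n), ‖xh‖ = 1 →
      Filter.Tendsto (fun lam : ℝ => rho (boostBall i (-s) (lam • xh)) / rho (lam • xh))
        (nhdsWithin 1 (Set.Iio 1))
        (nhds (1 / (Real.cosh s - xh i * Real.sinh s)))) := by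
  constructor
  · intro x hx
    rw [Metric.mem_ball, dist_zero_right] at hx
    rw [key i s x hx, inv_div]
    have h1 : (1 : ℝ) - ‖x‖ ^ 2 ≠ 0 := by
      have : ‖x‖ ^ 2 < 1 := by nlinarith [norm_nonneg x]
      linarith
    rw [rho]
    field_simp
    ring
  · intro xh hxh
    have hxi2 : (xh i) ^ 2 ≤ 1 := by
      have := sq_apply_le xh i
      rw [hxh] at this
      simpa using this
    have hch := Real.cosh_pos s
    have hchsq := Real.cosh_sq_sub_sinh_sq s
    have h2 : (xh i) ^ 2 * (Real.sinh s) ^ 2 ≤ (Real.sinh s) ^ 2 := by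
      nlinarith [sq_nonneg (Real.sinh s)]
    have hD1 : 0 < Real.cosh s - xh i * Real.sinh s := by
      nlinarith [sq_nonneg (Real.cosh s + xh i * Real.sinh s)]
    have hratio : ∀ lam : ℝ, lam ∈ Set.Ioo (-1 : ℝ) 1 →
        rho (boostBall i (-s) (lam • xh)) / rho (lam • xh) =
          1 / ((1 - lam ^ 2) / 2 + (1 + lam ^ 2) / 2 * Real.cosh s
            - lam * xh i * Real.sinh s) := by
      intro lam hlam
      have hn : ‖lam • xh‖ = |lam| := by
        rw [norm_smul, hxh, mul_one, Real.norm_eq_abs]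
      have hlt : ‖lam • xh‖ < 1 := by
        rw [hn]; exact abs_lt.mpr ⟨hlam.1, hlam.2⟩
      have hsq : ‖lam • xh‖ ^ 2 = lam ^ 2 := by rw [hn, sq_abs]
      have happ : (lam • xh) i = lam * xh i := rfl
      have hDp := Dpos i s (lam • xh) hlt
      rw [hsq, happ] at hDp
      have hrne : rho (lam • xh) ≠ 0 := by
        rw [rho, hsq]
        have hl : |lam| < 1 := abs_lt.mpr ⟨hlam.1, hlam.2⟩
        have : lam ^ 2 < 1 := by nlinarith [sq_abs lam, abs_nonneg lam]
        exact ne_of_gt (by linarith)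
      rw [key i s _ hlt, hsq, happ, div_right_comm, div_self hrne]
    have hcont : Filter.Tendsto
        (fun lam : ℝ => 1 / ((1 - lam ^ 2) / 2 + (1 + lam ^ 2) / 2 * Real.cosh s
          - lam * xh i * Real.sinh s)) (nhds 1)
        (nhds (1 / (Real.cosh s - xh i * Real.sinh s))) := by
      have hc : Continuous fun lam : ℝ => (1 - lam ^ 2) / 2 + (1 + lam ^ 2) / 2 * Real.cosh s
          - lam * xh i * Real.sinh s := by continuity
      have := hc.tendsto 1
      have h0 : ((1 - (1:ℝ) ^ 2) / 2 + (1 + (1:ℝ) ^ 2) / 2 * Real.cosh s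
          - 1 * xh i * Real.sinh s) = Real.cosh s - xh i * Real.sinh s := by ring
      rw [h0] at this
      exact Filter.Tendsto.div tendsto_const_nhds this (ne_of_gt hD1)
    have hev : ∀ᶠ lam in nhdsWithin (1 : ℝ) (Set.Iio 1), lam ∈ Set.Ioo (-1 : ℝ) 1 := by
      filter_upwards [self_mem_nhdsWithin,
        eventually_nhdsWithin_of_eventually_nhds (eventually_gt_nhds (by norm_num : (-1 : ℝ) < 1))]
        with lam h1' h2'
      exact ⟨h2', h1'⟩
    refine Filter.Tendsto.congr' ?_ (hcont.mono_left nhdsWithin_le_nhds)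
    filter_upwards [hev] with lam hlam
    exact (hratio lam hlam).symm


end
end
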